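/- Claim (ii) in the proof of Lemma 3.1: let f : ℝ^d → ℝ be smooth with compact support and set p := π·e^f. Then ∫_{ℝ^d} Γ_I(f,f)(x) p(x) dx = ∫_{ℝ^d} L̃f(x)·∇·(p γ)(x) dx + ½ ∫_{ℝ^d} Γ₁(f,f)(x)·∇·(p γ)(x) dx. -/

import Mathlib

open MeasureTheory
open scoped BigOperators

noncomputable section

/-- `i`-th partial derivative of `f` at `x`, in the coordinate direction `i`. -/
def pderiv' {d : ℕ} (f : EuclideanSpace ℝ (Fin d) → ℝ) (i : Fin d)
    (x : EuclideanSpace ℝ (Fin d)) : ℝ :=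
  fderiv ℝ f x (EuclideanSpace.single i 1)

/-- second partial derivative `∂_i ∂_j f` at `x`. -/
def pderiv2 {d : ℕ} (f : EuclideanSpace ℝ (Fin d) → ℝ) (i j : Fin d)
    (x : EuclideanSpace ℝ (Fin d)) : ℝ :=
  pderiv' (fun y => pderiv' f j y) i x

/-- Laplacian `Δf`. -/
def lap {d : ℕ} (f : EuclideanSpace ℝ (Fin d) → ℝ) (x : EuclideanSpace ℝ (Fin d)) : ℝ :=
  ∑ i, pderiv2 f i i x

/-- carré du champ `Γ₁(g,h) = ⟨∇g, ∇h⟩`. -/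
def Gamma1 {d : ℕ} (g h : EuclideanSpace ℝ (Fin d) → ℝ) (x : EuclideanSpace ℝ (Fin d)) : ℝ :=
  ∑ i, pderiv' g i x * pderiv' h i x

/-- generator `L̃ h = ⟨∇ log π, ∇h⟩ + Δh`. -/
def genL {d : ℕ} (π h : EuclideanSpace ℝ (Fin d) → ℝ) (x : EuclideanSpace ℝ (Fin d)) : ℝ :=
  Gamma1 (fun y => Real.log (π y)) h x + lap h x

/-- Gamma two operator `Γ₂(f,f) = ½ L̃ Γ₁(f,f) − Γ₁(L̃f, f)`. -/
def Gamma2 {d : ℕ} (π f : EuclideanSpace ℝ (Fin d) → ℝ) (x : EuclideanSpace ℝ (Fin d)) : ℝ :=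
  (1/2 : ℝ) * genL π (fun y => Gamma1 f f y) x - Gamma1 (fun y => genL π f y) f x

/-- information Gamma operator `Γ_I(f,f) = −½⟨γ, ∇Γ₁(f,f)⟩ + (L̃f)·⟨∇f, γ⟩`. -/
def GammaI {d : ℕ} (π : EuclideanSpace ℝ (Fin d) → ℝ)
    (γ : EuclideanSpace ℝ (Fin d) → EuclideanSpace ℝ (Fin d))
    (f : EuclideanSpace ℝ (Fin d) → ℝ) (x : EuclideanSpace ℝ (Fin d)) : ℝ :=
  -(1/2 : ℝ) * (∑ i, γ x i * pderiv' (fun y => Gamma1 f f y) i x)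
    + genL π f x * (∑ i, pderiv' f i x * γ x i)

/-- the tensor `ℜ` of the paper:
`ℜ_{ij} = −∂²_{ij} log π + ((3−2d)/8) γ_i γ_j − (1/8) δ_{ij} Σ_k γ_k²
          + ½(γ_i ∂_j log π + γ_j ∂_i log π)`. -/
def Rtensor {d : ℕ} (π : EuclideanSpace ℝ (Fin d) → ℝ)
    (γ : EuclideanSpace ℝ (Fin d) → EuclideanSpace ℝ (Fin d))
    (i j : Fin d) (x : EuclideanSpace ℝ (Fin d)) : ℝ :=
  -pderiv2 (fun y => Real.log (π y)) i j x
    + ((3 - 2 * (d : ℝ)) / 8) * γ x i * γ x j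
    - (1/8 : ℝ) * (if i = j then ∑ k, (γ x k) ^ 2 else 0)
    + (1/2 : ℝ) * (γ x i * pderiv' (fun y => Real.log (π y)) j x
        + γ x j * pderiv' (fun y => Real.log (π y)) i x)

/-- the modified Hessian matrix `𝔥ess f`. -/
def hessM {d : ℕ} (γ : EuclideanSpace ℝ (Fin d) → EuclideanSpace ℝ (Fin d))
    (f : EuclideanSpace ℝ (Fin d) → ℝ) (i j : Fin d) (x : EuclideanSpace ℝ (Fin d)) : ℝ :=
  if i = j then
    pderiv2 f i i x + (1/2 : ℝ) * (∑ k, γ x k * pderiv' f k x)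
      - (1/2 : ℝ) * γ x i * pderiv' f i x
  else
    pderiv2 f i j x - (1/4 : ℝ) * (γ x i * pderiv' f j x + γ x j * pderiv' f i x)

/-- right-hand side of the Fokker–Planck equation `−∇·(p b) + Δp` with drift
`b = ∇ log π − γ`, evaluated at a density `p`. -/
def FPrhs {d : ℕ} (π : EuclideanSpace ℝ (Fin d) → ℝ)
    (γ : EuclideanSpace ℝ (Fin d) → EuclideanSpace ℝ (Fin d))
    (p : EuclideanSpace ℝ (Fin d) → ℝ) (x : EuclideanSpace ℝ (Fin d)) : ℝ :=
  -(∑ i, pderiv' (fun y => p y * (pderiv' (fun z => Real.log (π z)) i y - γ y i)) i x)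
    + lap p x

/-- `L̃* p = −∇·(p ∇ log π) + Δp`. -/
def Ltilstar {d : ℕ} (π p : EuclideanSpace ℝ (Fin d) → ℝ)
    (x : EuclideanSpace ℝ (Fin d)) : ℝ :=
  -(∑ i, pderiv' (fun y => p y * pderiv' (fun z => Real.log (π z)) i y) i x) + lap p x

/-- Arnold–Carlen tensor `(ℜ_AC)_{ij} = −∂²_{ij} log π − ½(∂_i γ_j + ∂_j γ_i)`. -/
def RAC {d : ℕ} (π : EuclideanSpace ℝ (Fin d) → ℝ)
    (γ : EuclideanSpace ℝ (Fin d) → EuclideanSpace ℝ (Fin d))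
    (i j : Fin d) (x : EuclideanSpace ℝ (Fin d)) : ℝ :=
  -pderiv2 (fun y => Real.log (π y)) i j x
    - (1/2 : ℝ) * (pderiv' (fun y => γ y j) i x + pderiv' (fun y => γ y i) j x)


/-! Since `∇·(πγ) = 0`, the product rule gives `∇·(pγ) = p ⟨∇f, γ⟩`, so the second summand of
`Γ_I(f,f) p` is pointwise `L̃f · ∇·(pγ)`. The first summand, `-½ ⟨∇Γ₁(f,f), pγ⟩`, integrates to
`½ ∫ Γ₁(f,f) ∇·(pγ)` by the divergence theorem, `Γ₁(f,f)` being smooth with compact support. -/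

open scoped ContDiff

section PartialDerivatives

variable {d : ℕ}

theorem hasCompactSupport_pderiv' {f : EuclideanSpace ℝ (Fin d) → ℝ}
    (hf : HasCompactSupport f) (i : Fin d) : HasCompactSupport (pderiv' f i) :=
  hf.fderiv_apply ℝ (EuclideanSpace.single i 1)

theorem continuous_pderiv' {n : WithTop ℕ∞} {f : EuclideanSpace ℝ (Fin d) → ℝ}
    (hf : ContDiff ℝ n f) (hn : n ≠ 0) (i : Fin d) : Continuous (pderiv' f i) :=
  (hf.continuous_fderiv hn).clm_apply continuous_const

theorem contDiff_pderiv' {f : EuclideanSpace ℝ (Fin d) → ℝ} (hf : ContDiff ℝ ∞ f)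
    (i : Fin d) : ContDiff ℝ ∞ (pderiv' f i) :=
  (hf.fderiv_right (by simp)).clm_apply contDiff_const

theorem hasCompactSupport_sum_pderiv'_mul {f : EuclideanSpace ℝ (Fin d) → ℝ}
    (hf : HasCompactSupport f) (g : Fin d → EuclideanSpace ℝ (Fin d) → ℝ) :
    HasCompactSupport (fun x => ∑ i, pderiv' f i x * g i x) := by
  have hsum : (fun x => ∑ i, pderiv' f i x * g i x) = ∑ i, pderiv' f i * g i := by
    ext x
    simp
  rw [hsum]
  exact HasCompactSupport.finset_sum fun i _ => (hasCompactSupport_pderiv' hf i).mul_right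

theorem pderiv'_mul {a b : EuclideanSpace ℝ (Fin d) → ℝ} (ha : Differentiable ℝ a)
    (hb : Differentiable ℝ b) (i : Fin d) (x : EuclideanSpace ℝ (Fin d)) :
    pderiv' (fun y => a y * b y) i x = a x * pderiv' b i x + b x * pderiv' a i x := by
  simp [pderiv', fderiv_fun_mul (ha x) (hb x)]

theorem pderiv'_exp {f : EuclideanSpace ℝ (Fin d) → ℝ} (hf : Differentiable ℝ f) (i : Fin d)
    (x : EuclideanSpace ℝ (Fin d)) :
    pderiv' (fun y => Real.exp (f y)) i x = Real.exp (f x) * pderiv' f i x := by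
  simp [pderiv', fderiv_exp (hf x)]

theorem sum_pderiv'_mul_left {g : EuclideanSpace ℝ (Fin d) → ℝ}
    {V : Fin d → EuclideanSpace ℝ (Fin d) → ℝ} (hg : Differentiable ℝ g)
    (hV : ∀ i, Differentiable ℝ (V i)) (x : EuclideanSpace ℝ (Fin d)) :
    ∑ i, pderiv' (fun y => g y * V i y) i x
      = g x * ∑ i, pderiv' (V i) i x + ∑ i, pderiv' g i x * V i x := by
  simp only [pderiv'_mul hg (hV _), Finset.sum_add_distrib, Finset.mul_sum, mul_comm]

theorem sum_pderiv'_mul_exp_mul {π f : EuclideanSpace ℝ (Fin d) → ℝ}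
    {V : Fin d → EuclideanSpace ℝ (Fin d) → ℝ} (hπ : Differentiable ℝ π)
    (hf : Differentiable ℝ f) (hV : ∀ i, Differentiable ℝ (V i))
    {x : EuclideanSpace ℝ (Fin d)} (hπV : ∑ i, pderiv' (fun y => π y * V i y) i x = 0) :
    ∑ i, pderiv' (fun y => π y * Real.exp (f y) * V i y) i x
      = π x * Real.exp (f x) * ∑ i, pderiv' f i x * V i x := by
  have hswap : ∀ i, (fun y => π y * Real.exp (f y) * V i y)
      = fun y => Real.exp (f y) * (π y * V i y) := fun i => funext fun y => by ring
  rw [Finset.sum_congr rfl fun i _ => congrArg (pderiv' · i x) (hswap i),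
    sum_pderiv'_mul_left (V := fun i y => π y * V i y) hf.exp (fun i => hπ.mul (hV i)) x, hπV,
    mul_zero, zero_add, Finset.mul_sum]
  exact Finset.sum_congr rfl fun i _ => by rw [pderiv'_exp hf]; ring

theorem integral_mul_pderiv'_eq_neg {u v : EuclideanSpace ℝ (Fin d) → ℝ}
    (hu : ContDiff ℝ 1 u) (hv : ContDiff ℝ 1 v) (huc : HasCompactSupport u) (i : Fin d) :
    ∫ x, u x * pderiv' v i x = -∫ x, pderiv' u i x * v x :=
  integral_mul_fderiv_eq_neg_fderiv_mul_of_integrable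
    (((continuous_pderiv' hu one_ne_zero i).mul hv.continuous).integrable_of_hasCompactSupport
      (hasCompactSupport_pderiv' huc i).mul_right)
    ((hu.continuous.mul (continuous_pderiv' hv one_ne_zero i)).integrable_of_hasCompactSupport
      huc.mul_right)
    ((hu.continuous.mul hv.continuous).integrable_of_hasCompactSupport huc.mul_right)
    (fun x _ => hu.differentiable one_ne_zero x) (fun x _ => hv.differentiable one_ne_zero x)

theorem integral_mul_sum_pderiv'_eq_neg {u : EuclideanSpace ℝ (Fin d) → ℝ}
    {V : Fin d → EuclideanSpace ℝ (Fin d) → ℝ} (hu : ContDiff ℝ 1 u)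
    (hV : ∀ i, ContDiff ℝ 1 (V i)) (huc : HasCompactSupport u) :
    ∫ x, u x * ∑ i, pderiv' (V i) i x = -∫ x, ∑ i, pderiv' u i x * V i x := by
  simp only [Finset.mul_sum]
  rw [integral_finsetSum (f := fun i x => u x * pderiv' (V i) i x) _ fun i _ =>
      (hu.continuous.mul (continuous_pderiv' (hV i) one_ne_zero i)).integrable_of_hasCompactSupport
        huc.mul_right,
    integral_finsetSum (f := fun i x => pderiv' u i x * V i x) _ fun i _ =>
      ((continuous_pderiv' hu one_ne_zero i).mul (hV i).continuous).integrable_of_hasCompactSupport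
        (hasCompactSupport_pderiv' huc i).mul_right,
    ← Finset.sum_neg_distrib]
  exact Finset.sum_congr rfl fun i _ => integral_mul_pderiv'_eq_neg hu (hV i) huc i

theorem contDiff_gamma1 {g h : EuclideanSpace ℝ (Fin d) → ℝ} (hg : ContDiff ℝ ∞ g)
    (hh : ContDiff ℝ ∞ h) : ContDiff ℝ ∞ (Gamma1 g h) :=
  ContDiff.sum fun i _ => (contDiff_pderiv' hg i).mul (contDiff_pderiv' hh i)

theorem contDiff_genL {π f : EuclideanSpace ℝ (Fin d) → ℝ} (hπ : ContDiff ℝ ∞ π)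
    (hπpos : ∀ x, 0 < π x) (hf : ContDiff ℝ ∞ f) : ContDiff ℝ ∞ (genL π f) := by
  unfold genL lap pderiv2
  exact (contDiff_gamma1 (hπ.log fun x => (hπpos x).ne') hf).add
    (ContDiff.sum fun i _ => contDiff_pderiv' (contDiff_pderiv' hf i) i)

theorem gammaI_mul (π : EuclideanSpace ℝ (Fin d) → ℝ)
    (γ : EuclideanSpace ℝ (Fin d) → EuclideanSpace ℝ (Fin d))
    (f : EuclideanSpace ℝ (Fin d) → ℝ) (x : EuclideanSpace ℝ (Fin d)) (q : ℝ) :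
    GammaI π γ f x * q = genL π f x * (q * ∑ i, pderiv' f i x * γ x i)
      + 1 / 2 * -∑ i, pderiv' (Gamma1 f f) i x * (q * γ x i) := by
  have hdrift : ∑ i, pderiv' (Gamma1 f f) i x * (q * γ x i)
      = q * ∑ i, γ x i * pderiv' (Gamma1 f f) i x := by
    rw [Finset.mul_sum]
    exact Finset.sum_congr rfl fun i _ => by ring
  rw [hdrift, GammaI]
  ring

end PartialDerivatives

theorem claim_ii_gamma_I_weak_general
    (d : ℕ)
    (π : EuclideanSpace ℝ (Fin d) → ℝ) (hπ : ContDiff ℝ (⊤ : ℕ∞) π)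
    (hπpos : ∀ x, 0 < π x)
    (γ : EuclideanSpace ℝ (Fin d) → EuclideanSpace ℝ (Fin d))
    (hγ : ContDiff ℝ (⊤ : ℕ∞) γ)
    (hstat : ∀ x, ∑ i, pderiv' (fun y => π y * γ y i) i x = 0)
    (f : EuclideanSpace ℝ (Fin d) → ℝ) (hf : ContDiff ℝ (⊤ : ℕ∞) f)
    (hfc : HasCompactSupport f) :
    ∫ x, GammaI π γ f x * (π x * Real.exp (f x)) =
      (∫ x, genL π f x *
          (∑ i, pderiv' (fun y => (π y * Real.exp (f y)) * γ y i) i x))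
        + (1/2 : ℝ) * ∫ x, Gamma1 f f x *
            (∑ i, pderiv' (fun y => (π y * Real.exp (f y)) * γ y i) i x) := by
  have hγi : ∀ i : Fin d, ContDiff ℝ ∞ (fun y => γ y i) := fun i =>
    (EuclideanSpace.proj (𝕜 := ℝ) i).contDiff.comp hγ
  have hp : ContDiff ℝ ∞ (fun y => π y * Real.exp (f y)) := hπ.mul hf.exp
  have hdiv : ∀ x, ∑ i, pderiv' (fun y => (π y * Real.exp (f y)) * γ y i) i x
      = (π x * Real.exp (f x)) * ∑ i, pderiv' f i x * γ x i := fun x =>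
    sum_pderiv'_mul_exp_mul (V := fun i y => γ y i) (hπ.differentiable (by simp))
      (hf.differentiable (by simp)) (fun i => (hγi i).differentiable (by simp)) (hstat x)
  have hΓ : ContDiff ℝ ∞ (Gamma1 f f) := contDiff_gamma1 hf hf
  have hΓc : HasCompactSupport (Gamma1 f f) := hasCompactSupport_sum_pderiv'_mul hfc (pderiv' f)
  have hibp : ∫ x, Gamma1 f f x * ∑ i, pderiv' (fun y => (π y * Real.exp (f y)) * γ y i) i x
      = -∫ x, ∑ i, pderiv' (Gamma1 f f) i x * ((π x * Real.exp (f x)) * γ x i) :=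
    integral_mul_sum_pderiv'_eq_neg (hΓ.of_le (by simp))
      (fun i => (hp.mul (hγi i)).of_le (by simp)) hΓc
  have hA : Integrable (fun x => genL π f x *
      ((π x * Real.exp (f x)) * ∑ i, pderiv' f i x * γ x i)) :=
    Continuous.integrable_of_hasCompactSupport
      ((contDiff_genL hπ hπpos hf).continuous.mul (hp.continuous.mul
        (continuous_finsetSum _ fun i _ =>
          (continuous_pderiv' hf (by simp) i).mul (hγi i).continuous)))
      (hasCompactSupport_sum_pderiv'_mul hfc fun i y => γ y i).mul_left.mul_left
  have hB : Integrable
      (fun x => ∑ i, pderiv' (Gamma1 f f) i x * ((π x * Real.exp (f x)) * γ x i)) :=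
    integrable_finsetSum _ fun i _ =>
      Continuous.integrable_of_hasCompactSupport
        ((continuous_pderiv' hΓ (by simp) i).mul (hp.mul (hγi i)).continuous)
        (hasCompactSupport_pderiv' hΓc i).mul_right
  rw [hibp]
  simp only [hdiv, gammaI_mul]
  rw [← integral_neg, ← integral_const_mul, integral_add hA (hB.fun_neg.const_mul _)]

/-- Claim (ii) in the proof of Lemma 3.1:
`∫ Γ_I(f,f) p = ∫ L̃f · ∇·(pγ) + ½ ∫ Γ₁(f,f) · ∇·(pγ)` where `p = π e^f`. -/
theorem claim_ii_gamma_I_weak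
    (d : ℕ) (hd : 1 ≤ d)
    (π : EuclideanSpace ℝ (Fin d) → ℝ) (hπ : ContDiff ℝ (⊤ : ℕ∞) π)
    (hπpos : ∀ x, 0 < π x)
    (γ : EuclideanSpace ℝ (Fin d) → EuclideanSpace ℝ (Fin d))
    (hγ : ContDiff ℝ (⊤ : ℕ∞) γ)
    (hstat : ∀ x, ∑ i, pderiv' (fun y => π y * γ y i) i x = 0)
    (f : EuclideanSpace ℝ (Fin d) → ℝ) (hf : ContDiff ℝ (⊤ : ℕ∞) f)
    (hfc : HasCompactSupport f) :
    ∫ x, GammaI π γ f x * (π x * Real.exp (f x)) =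
      (∫ x, genL π f x *
          (∑ i, pderiv' (fun y => (π y * Real.exp (f y)) * γ y i) i x))
        + (1/2 : ℝ) * ∫ x, Gamma1 f f x *
            (∑ i, pderiv' (fun y => (π y * Real.exp (f y)) * γ y i) i x) :=
  claim_ii_gamma_I_weak_general d π hπ hπpos γ hγ hstat f hf hfc

end
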